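/- Let θ̄ ∈ ℝ^k, let I be a k×k real symmetric matrix, and let r : ℝ^k → ℝ satisfy r(θ̄) = 0 and r(θ) = o(‖θ − θ̄‖²) as θ → θ̄. For each n let V_n, θ̂_n, θ̃_n : Ω_n → ℝ^k be random vectors on a probability space (Ω_n, F_n, P_n) such that: (i) the laws of V_n converge weakly to the law of some random vector in ℝ^k; (ii) √n(θ̂_n − θ̄) − V_n → 0 in probability; (iii) √n(θ̃_n − θ̄) − V_n → 0 in probability. Define HD_n = (θ̂_n − θ̄)ᵀ I (θ̂_n − θ̄) + r(θ̂_n) and W_n = n (θ̃_n − θ̄)ᵀ I (θ̃_n − θ̄). Then n·HD_n − W_n → 0 in probability. -/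

import Mathlib

/-!
Write `Xₙ = √n (θ̂ₙ - θ̄)` and `Yₙ = √n (θ̃ₙ - θ̄)`. Then `n·HDₙ - Wₙ = q(Xₙ) - q(Yₙ) + n r(θ̂ₙ)`
with `q` the quadratic form of `I`. Weak convergence makes `Vₙ` bounded in probability (portmanteau
applied to the closed sets `{‖x‖ ≥ M}`), hence so are `Xₙ` and `Yₙ`, while `Xₙ - Yₙ → 0` in
probability. The polarization `q x - q y = B(x - y, x) + B(y, x - y)` bounds the quadratic part by
a bounded factor times `‖Xₙ - Yₙ‖`. On `{‖Xₙ‖ < M}` eventually `‖θ̂ₙ - θ̄‖ < M / √n < δ`, where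
`|n r(θ̂ₙ)| ≤ ε ‖Xₙ‖² ≤ ε M²`.
-/

open MeasureTheory Filter
open scoped Topology ENNReal

theorem measure_le_of_subset_union {α : Type*} [MeasurableSpace α] {μ : Measure α}
    {s t u : Set α} {ε : ℝ≥0∞} (h : s ⊆ t ∪ u) (ht : μ t ≤ ε / 2) (hu : μ u ≤ ε / 2) :
    μ s ≤ ε :=
  calc μ s ≤ μ t + μ u := (measure_mono h).trans (measure_union_le t u)
    _ ≤ ε / 2 + ε / 2 := add_le_add ht hu
    _ = ε := ENNReal.add_halves ε

theorem tendsto_measure_norm_ge_atTop {E : Type*} [NormedAddCommGroup E] [MeasurableSpace E]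
    [OpensMeasurableSpace E] (μ : Measure E) [IsFiniteMeasure μ] :
    Tendsto (fun M : ℝ => μ {x | M ≤ ‖x‖}) atTop (𝓝 0) := by
  have hinter : ⋂ M : ℝ, {x : E | M ≤ ‖x‖} = ∅ := by
    ext x
    simpa using ⟨‖x‖ + 1, by linarith⟩
  have h := tendsto_measure_iInter_atTop (μ := μ)
    (fun M => (measurableSet_le measurable_const measurable_norm).nullMeasurableSet)
    (fun M N hMN x (hx : N ≤ ‖x‖) => le_trans hMN hx) ⟨0, measure_ne_top _ _⟩
  rwa [hinter, measure_empty] at h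

theorem exists_eventually_measure_norm_ge_lt_of_tendsto {E : Type*}
    [NormedAddCommGroup E] [MeasurableSpace E] [OpensMeasurableSpace E]
    {μs : ℕ → ProbabilityMeasure E} {μ : ProbabilityMeasure E} (hμ : Tendsto μs atTop (𝓝 μ))
    {ε : ℝ≥0∞} (hε : 0 < ε) :
    ∃ M : ℝ, ∀ᶠ n in atTop, (μs n : Measure E) {x | M ≤ ‖x‖} < ε := by
  obtain ⟨M, hM⟩ := ((tendsto_measure_norm_ge_atTop (μ : Measure E)).eventually_lt_const hε).exists
  refine ⟨M, eventually_lt_of_limsup_lt ?_⟩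
  exact (ProbabilityMeasure.limsup_measure_closed_le_of_tendsto hμ
    (isClosed_le continuous_const continuous_norm)).trans_lt hM

section InProbability

variable {Ω : ℕ → Type*} [∀ n, MeasurableSpace (Ω n)] {P : ∀ n, Measure (Ω n)}
  {E F G : Type*} [NormedAddCommGroup E] [NormedAddCommGroup F] [NormedAddCommGroup G]

variable (P) in
def TendstoInProbabilityZero (X : ∀ n, Ω n → E) : Prop :=
  ∀ c : ℝ, 0 < c → Tendsto (fun n => P n {ω | c ≤ ‖X n ω‖}) atTop (𝓝 0)

variable (P) in
def BoundedInProbability (X : ∀ n, Ω n → E) : Prop :=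
  ∀ ε : ℝ≥0∞, 0 < ε → ∃ M : ℝ, ∀ᶠ n in atTop, P n {ω | M ≤ ‖X n ω‖} ≤ ε

theorem tendstoInProbabilityZero_iff_toReal [∀ n, IsFiniteMeasure (P n)] {X : ∀ n, Ω n → E} :
    TendstoInProbabilityZero P X ↔ ∀ c : ℝ, 0 < c →
      Tendsto (fun n => (P n {ω | c ≤ ‖X n ω‖}).toReal) atTop (𝓝 0) := by
  refine forall₂_congr fun c _ => ?_
  rw [← ENNReal.toReal_zero, ENNReal.tendsto_toReal_iff (fun n => measure_ne_top _ _)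
    ENNReal.zero_ne_top]

namespace TendstoInProbabilityZero

theorem mono {X : ∀ n, Ω n → E} {Y : ∀ n, Ω n → F} (hY : TendstoInProbabilityZero P Y)
    (h : ∀ n ω, ‖X n ω‖ ≤ ‖Y n ω‖) : TendstoInProbabilityZero P X := fun c hc =>
  tendsto_of_tendsto_of_tendsto_of_le_of_le tendsto_const_nhds (hY c hc) (fun _ => zero_le)
    fun n => measure_mono fun _ hω => le_trans hω (h n _)

theorem add {X Y : ∀ n, Ω n → E} (hX : TendstoInProbabilityZero P X)
    (hY : TendstoInProbabilityZero P Y) :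
    TendstoInProbabilityZero P (fun n ω => X n ω + Y n ω) := by
  intro c hc
  have hsub : ∀ n, {ω | c ≤ ‖X n ω + Y n ω‖} ⊆
      {ω | c / 2 ≤ ‖X n ω‖} ∪ {ω | c / 2 ≤ ‖Y n ω‖} := by
    intro n ω hω
    by_contra hω'
    simp only [Set.mem_union, Set.mem_ofPred_eq, not_or, not_le] at hω hω'
    linarith [norm_add_le (X n ω) (Y n ω)]
  have hlim := (hX (c / 2) (half_pos hc)).add (hY (c / 2) (half_pos hc))
  rw [add_zero] at hlim
  exact tendsto_of_tendsto_of_tendsto_of_le_of_le tendsto_const_nhds hlim (fun _ => zero_le)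
    fun n => (measure_mono (hsub n)).trans (measure_union_le _ _)

theorem neg {X : ∀ n, Ω n → E} (hX : TendstoInProbabilityZero P X) :
    TendstoInProbabilityZero P (fun n ω => -X n ω) :=
  hX.mono fun _ _ => (norm_neg _).le

theorem sub {X Y : ∀ n, Ω n → E} (hX : TendstoInProbabilityZero P X)
    (hY : TendstoInProbabilityZero P Y) :
    TendstoInProbabilityZero P (fun n ω => X n ω - Y n ω) := by
  simpa only [sub_eq_add_neg] using hX.add hY.neg

theorem boundedInProbability {X : ∀ n, Ω n → E} (hX : TendstoInProbabilityZero P X) :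
    BoundedInProbability P X := fun ε hε =>
  ⟨1, (ENNReal.tendsto_nhds_zero.1 (hX 1 one_pos)) ε hε⟩

end TendstoInProbabilityZero

namespace BoundedInProbability

theorem exists_pos {X : ∀ n, Ω n → E} (hX : BoundedInProbability P X) {ε : ℝ≥0∞} (hε : 0 < ε) :
    ∃ M : ℝ, 0 < M ∧ ∀ᶠ n in atTop, P n {ω | M ≤ ‖X n ω‖} ≤ ε := by
  obtain ⟨M, hM⟩ := hX ε hε
  refine ⟨max M 1, by positivity, hM.mono fun n hn => (measure_mono ?_).trans hn⟩
  exact fun ω hω => le_trans (le_max_left M 1) hω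

theorem add {X Y : ∀ n, Ω n → E} (hX : BoundedInProbability P X)
    (hY : BoundedInProbability P Y) :
    BoundedInProbability P (fun n ω => X n ω + Y n ω) := by
  intro ε hε
  obtain ⟨M, hM⟩ := hX (ε / 2) (ENNReal.half_pos hε.ne')
  obtain ⟨N, hN⟩ := hY (ε / 2) (ENNReal.half_pos hε.ne')
  refine ⟨M + N, (hM.and hN).mono fun n hn => ?_⟩
  have hsub : {ω | M + N ≤ ‖X n ω + Y n ω‖} ⊆ {ω | M ≤ ‖X n ω‖} ∪ {ω | N ≤ ‖Y n ω‖} := by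
    intro ω hω
    by_contra hω'
    simp only [Set.mem_union, Set.mem_ofPred_eq, not_or, not_le] at hω hω'
    linarith [norm_add_le (X n ω) (Y n ω)]
  exact measure_le_of_subset_union hsub hn.1 hn.2

end BoundedInProbability

theorem TendstoInProbabilityZero.of_norm_le_mul {X : ∀ n, Ω n → E} {Y : ∀ n, Ω n → F}
    {Z : ∀ n, Ω n → G} (hX : BoundedInProbability P X) (hY : TendstoInProbabilityZero P Y)
    {C : ℝ} (h : ∀ n ω, ‖Z n ω‖ ≤ C * (‖X n ω‖ * ‖Y n ω‖)) :
    TendstoInProbabilityZero P Z := by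
  intro c hc
  refine ENNReal.tendsto_nhds_zero.2 fun ε hε => ?_
  obtain ⟨M, hM, hXM⟩ := hX.exists_pos (ENNReal.half_pos hε.ne')
  set η := c / ((|C| + 1) * M)
  have hη : 0 < η := by positivity
  have hYη := ENNReal.tendsto_nhds_zero.1 (hY η hη) (ε / 2) (ENNReal.half_pos hε.ne')
  filter_upwards [hXM, hYη] with n hXn hYn
  have hsub : {ω | c ≤ ‖Z n ω‖} ⊆ {ω | M ≤ ‖X n ω‖} ∪ {ω | η ≤ ‖Y n ω‖} := by
    intro ω hω
    by_contra hω'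
    simp only [Set.mem_union, Set.mem_ofPred_eq, not_or, not_le] at hω hω'
    have hprod : ‖X n ω‖ * ‖Y n ω‖ < M * η :=
      mul_lt_mul'' hω'.1 hω'.2 (norm_nonneg _) (norm_nonneg _)
    have hMη : (|C| + 1) * (M * η) = c := by
      simp only [η]; field_simp
    nlinarith [h n ω, le_abs_self C, abs_nonneg C,
      mul_nonneg (norm_nonneg (X n ω)) (norm_nonneg (Y n ω))]
  exact measure_le_of_subset_union hsub hXn hYn

theorem boundedInProbability_of_tendsto_integral [∀ n, IsProbabilityMeasure (P n)]
    [MeasurableSpace E] [BorelSpace E] {V : ∀ n, Ω n → E} (hV : ∀ n, Measurable (V n))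
    {Ω' : Type*} [MeasurableSpace Ω'] {Q : Measure Ω'} [IsProbabilityMeasure Q]
    {T : Ω' → E} (hT : Measurable T)
    (hconv : ∀ f : BoundedContinuousFunction E ℝ,
      Tendsto (fun n => ∫ ω, f (V n ω) ∂(P n)) atTop (𝓝 (∫ ω, f (T ω) ∂Q))) :
    BoundedInProbability P V := by
  let law : ∀ n, ProbabilityMeasure E := fun n =>
    ⟨(P n).map (V n), Measure.isProbabilityMeasure_map (hV n).aemeasurable⟩
  let lawT : ProbabilityMeasure E :=
    ⟨Q.map T, Measure.isProbabilityMeasure_map hT.aemeasurable⟩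
  have hlaw : Tendsto law atTop (𝓝 lawT) := by
    refine ProbabilityMeasure.tendsto_iff_forall_integral_tendsto.2 fun f => ?_
    simp only [law, lawT, ProbabilityMeasure.coe_mk]
    rw [integral_map hT.aemeasurable f.continuous.aestronglyMeasurable]
    simpa only [integral_map (hV _).aemeasurable f.continuous.aestronglyMeasurable] using hconv f
  intro ε hε
  obtain ⟨M, hM⟩ := exists_eventually_measure_norm_ge_lt_of_tendsto hlaw hε
  refine ⟨M, hM.mono fun n hn => ?_⟩
  simp only [law, ProbabilityMeasure.coe_mk] at hn
  rw [Measure.map_apply (hV n) (measurableSet_le measurable_const measurable_norm)] at hn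
  exact hn.le

theorem tendstoInProbabilityZero_natCast_mul_of_isLittleO_sq [NormedSpace ℝ E] {r : E → ℝ} {θ₀ : E}
    (hr : ∀ ε : ℝ, 0 < ε → ∃ δ : ℝ, 0 < δ ∧ ∀ θ : E, ‖θ - θ₀‖ < δ → |r θ| ≤ ε * ‖θ - θ₀‖ ^ 2)
    {θ : ∀ n, Ω n → E} (hθ : BoundedInProbability P (fun n ω => Real.sqrt n • (θ n ω - θ₀))) :
    TendstoInProbabilityZero P (fun n ω => (n : ℝ) * r (θ n ω)) := by
  intro c hc
  refine ENNReal.tendsto_nhds_zero.2 fun ε hε => ?_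
  obtain ⟨M, hM, hθM⟩ := hθ.exists_pos hε
  obtain ⟨δ, hδ, hrδ⟩ := hr (c / M ^ 2) (by positivity)
  have hsqrt : ∀ᶠ n : ℕ in atTop, M < Real.sqrt n * δ :=
    ((Real.tendsto_sqrt_atTop.comp tendsto_natCast_atTop_atTop).atTop_mul_const hδ
      ).eventually_gt_atTop M
  filter_upwards [hθM, hsqrt] with n hn hnδ
  refine (measure_mono fun ω hω => ?_).trans hn
  by_contra hlt
  simp only [Set.mem_ofPred_eq, not_le, Real.norm_eq_abs] at hω hlt
  rw [norm_smul, Real.norm_of_nonneg (Real.sqrt_nonneg _)] at hlt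
  set d := ‖θ n ω - θ₀‖
  have hsqrt_pos : 0 < Real.sqrt n := pos_of_mul_pos_left (hM.trans hnδ) hδ.le
  have hd : d < δ := lt_of_mul_lt_mul_left (hlt.trans hnδ) hsqrt_pos.le
  have hsq : Real.sqrt n ^ 2 = n := Real.sq_sqrt (Nat.cast_nonneg n)
  have hrem : |(n : ℝ) * r (θ n ω)| ≤ c / M ^ 2 * (Real.sqrt n * d) ^ 2 := by
    rw [abs_mul, Nat.abs_cast, mul_pow, hsq, mul_left_comm]
    exact mul_le_mul_of_nonneg_left (hrδ _ hd) (Nat.cast_nonneg n)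
  have hsmall : c / M ^ 2 * (Real.sqrt n * d) ^ 2 < c / M ^ 2 * M ^ 2 := by
    gcongr
  rw [div_mul_cancel₀ c (by positivity)] at hsmall
  linarith

end InProbability

section MatrixForm

variable {ι : Type*} [Fintype ι] (A : Matrix ι ι ℝ)

def matrixForm (u v : EuclideanSpace ℝ ι) : ℝ := ∑ i, ∑ j, u i * A i j * v j

theorem abs_matrixForm_le (u v : EuclideanSpace ℝ ι) :
    |matrixForm A u v| ≤ (∑ i, ∑ j, |A i j|) * (‖u‖ * ‖v‖) := by
  rw [Finset.sum_mul]
  refine (Finset.abs_sum_le_sum_abs _ _).trans (Finset.sum_le_sum fun i _ => ?_)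
  rw [Finset.sum_mul]
  refine (Finset.abs_sum_le_sum_abs _ _).trans (Finset.sum_le_sum fun j _ => ?_)
  rw [abs_mul, abs_mul, mul_comm |u i|, mul_assoc]
  gcongr
  · exact PiLp.norm_apply_le u i
  · exact PiLp.norm_apply_le v j

theorem matrixForm_smul_smul (a : ℝ) (u v : EuclideanSpace ℝ ι) :
    matrixForm A (a • u) (a • v) = a ^ 2 * matrixForm A u v := by
  simp only [matrixForm, Finset.mul_sum, PiLp.smul_apply, smul_eq_mul]
  exact Finset.sum_congr rfl fun i _ => Finset.sum_congr rfl fun j _ => by ring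

theorem matrixForm_self_sub_self (u v : EuclideanSpace ℝ ι) :
    matrixForm A u u - matrixForm A v v = matrixForm A (u - v) u + matrixForm A v (u - v) := by
  simp only [matrixForm, ← Finset.sum_sub_distrib, ← Finset.sum_add_distrib, PiLp.sub_apply]
  exact Finset.sum_congr rfl fun i _ => Finset.sum_congr rfl fun j _ => by ring

end MatrixForm

theorem stmt_3_general {k : ℕ} (θbar : EuclideanSpace ℝ (Fin k))
    (I : Matrix (Fin k) (Fin k) ℝ)
    (r : EuclideanSpace ℝ (Fin k) → ℝ)
    (hlittleo : ∀ ε : ℝ, 0 < ε → ∃ δ : ℝ, 0 < δ ∧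
      ∀ θ : EuclideanSpace ℝ (Fin k), ‖θ - θbar‖ < δ → |r θ| ≤ ε * ‖θ - θbar‖ ^ 2)
    {Ω : ℕ → Type*} [∀ n, MeasurableSpace (Ω n)]
    (P : ∀ n, Measure (Ω n)) [∀ n, IsProbabilityMeasure (P n)]
    (V θhat θtilde : ∀ n, Ω n → EuclideanSpace ℝ (Fin k))
    (hV : ∀ n, Measurable (V n))
    {Ω' : Type*} [MeasurableSpace Ω'] (Q : Measure Ω') [IsProbabilityMeasure Q]
    (T : Ω' → EuclideanSpace ℝ (Fin k)) (hT : Measurable T)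
    (hVconv : ∀ f : BoundedContinuousFunction (EuclideanSpace ℝ (Fin k)) ℝ,
      Tendsto (fun n => ∫ ω, f (V n ω) ∂(P n)) atTop (nhds (∫ ω, f (T ω) ∂Q)))
    (hhat : ∀ c : ℝ, 0 < c → Tendsto
      (fun n => ((P n) {ω | c ≤ ‖Real.sqrt n • (θhat n ω - θbar) - V n ω‖}).toReal)
      atTop (nhds 0))
    (htilde : ∀ c : ℝ, 0 < c → Tendsto
      (fun n => ((P n) {ω | c ≤ ‖Real.sqrt n • (θtilde n ω - θbar) - V n ω‖}).toReal)
      atTop (nhds 0)) :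
    ∀ c : ℝ, 0 < c → Tendsto
      (fun n => ((P n) {ω | c ≤
        |(n : ℝ) * ((∑ i, ∑ j, (θhat n ω - θbar) i * I i j * (θhat n ω - θbar) j)
            + r (θhat n ω))
          - (n : ℝ) * (∑ i, ∑ j, (θtilde n ω - θbar) i * I i j * (θtilde n ω - θbar) j)|}).toReal)
      atTop (nhds 0) := by
  let X : ∀ n, Ω n → EuclideanSpace ℝ (Fin k) := fun n ω => Real.sqrt n • (θhat n ω - θbar)
  let Y : ∀ n, Ω n → EuclideanSpace ℝ (Fin k) := fun n ω => Real.sqrt n • (θtilde n ω - θbar)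
  have hXV : TendstoInProbabilityZero P (fun n ω => X n ω - V n ω) :=
    tendstoInProbabilityZero_iff_toReal.2 hhat
  have hYV : TendstoInProbabilityZero P (fun n ω => Y n ω - V n ω) :=
    tendstoInProbabilityZero_iff_toReal.2 htilde
  have hVb : BoundedInProbability P V := boundedInProbability_of_tendsto_integral hV hT hVconv
  have hXb : BoundedInProbability P X := by
    simpa only [add_sub_cancel] using hVb.add hXV.boundedInProbability
  have hYb : BoundedInProbability P Y := by
    simpa only [add_sub_cancel] using hVb.add hYV.boundedInProbability
  have hXY : TendstoInProbabilityZero P (fun n ω => X n ω - Y n ω) := by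
    simpa only [sub_sub_sub_cancel_right] using hXV.sub hYV
  have hquad : TendstoInProbabilityZero P
      (fun n ω => matrixForm I (X n ω - Y n ω) (X n ω) + matrixForm I (Y n ω) (X n ω - Y n ω)) :=
    (hXY.of_norm_le_mul hXb fun n ω => by
        rw [Real.norm_eq_abs, mul_comm ‖X n ω‖]; exact abs_matrixForm_le I _ _).add
      (hXY.of_norm_le_mul hYb fun n ω => abs_matrixForm_le I _ _)
  have hrem : TendstoInProbabilityZero P (fun n ω => (n : ℝ) * r (θhat n ω)) :=
    tendstoInProbabilityZero_natCast_mul_of_isLittleO_sq hlittleo hXb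
  have hstat : ∀ (n : ℕ) ω,
      (n : ℝ) * ((∑ i, ∑ j, (θhat n ω - θbar) i * I i j * (θhat n ω - θbar) j) + r (θhat n ω))
        - (n : ℝ) * (∑ i, ∑ j, (θtilde n ω - θbar) i * I i j * (θtilde n ω - θbar) j)
      = matrixForm I (X n ω - Y n ω) (X n ω) + matrixForm I (Y n ω) (X n ω - Y n ω)
        + (n : ℝ) * r (θhat n ω) := by
    intro n ω
    rw [← matrixForm_self_sub_self]
    simp only [X, Y, matrixForm_smul_smul, Real.sq_sqrt (Nat.cast_nonneg _)]
    unfold matrixForm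
    ring
  simpa only [hstat, Real.norm_eq_abs] using tendstoInProbabilityZero_iff_toReal.1 (hquad.add hrem)

/-- Theorem 1: under first-order efficiency expansions for the minimum Hellinger distance
estimator `θ̂ n` and the maximum likelihood estimator `θ̃ n`, the scaled squared Hellinger
distance statistic `n·HD n = n·((θ̂ n - θ̄)ᵀ I (θ̂ n - θ̄) + r(θ̂ n))` and the Wald statistic
`W n = n·(θ̃ n - θ̄)ᵀ I (θ̃ n - θ̄)` differ by `o_p(1)`. -/
theorem stmt_3 {k : ℕ} (θbar : EuclideanSpace ℝ (Fin k))
    (I : Matrix (Fin k) (Fin k) ℝ) (hI : I.IsSymm)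
    (r : EuclideanSpace ℝ (Fin k) → ℝ) (hr0 : r θbar = 0)
    (hlittleo : ∀ ε : ℝ, 0 < ε → ∃ δ : ℝ, 0 < δ ∧
      ∀ θ : EuclideanSpace ℝ (Fin k), ‖θ - θbar‖ < δ → |r θ| ≤ ε * ‖θ - θbar‖ ^ 2)
    {Ω : ℕ → Type*} [∀ n, MeasurableSpace (Ω n)]
    (P : ∀ n, Measure (Ω n)) [∀ n, IsProbabilityMeasure (P n)]
    (V θhat θtilde : ∀ n, Ω n → EuclideanSpace ℝ (Fin k))
    (hV : ∀ n, Measurable (V n)) (hθhat : ∀ n, Measurable (θhat n))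
    (hθtilde : ∀ n, Measurable (θtilde n))
    {Ω' : Type*} [MeasurableSpace Ω'] (Q : Measure Ω') [IsProbabilityMeasure Q]
    (T : Ω' → EuclideanSpace ℝ (Fin k)) (hT : Measurable T)
    (hVconv : ∀ f : BoundedContinuousFunction (EuclideanSpace ℝ (Fin k)) ℝ,
      Tendsto (fun n => ∫ ω, f (V n ω) ∂(P n)) atTop (nhds (∫ ω, f (T ω) ∂Q)))
    (hhat : ∀ c : ℝ, 0 < c → Tendsto
      (fun n => ((P n) {ω | c ≤ ‖Real.sqrt n • (θhat n ω - θbar) - V n ω‖}).toReal)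
      atTop (nhds 0))
    (htilde : ∀ c : ℝ, 0 < c → Tendsto
      (fun n => ((P n) {ω | c ≤ ‖Real.sqrt n • (θtilde n ω - θbar) - V n ω‖}).toReal)
      atTop (nhds 0)) :
    ∀ c : ℝ, 0 < c → Tendsto
      (fun n => ((P n) {ω | c ≤
        |(n : ℝ) * ((∑ i, ∑ j, (θhat n ω - θbar) i * I i j * (θhat n ω - θbar) j)
            + r (θhat n ω))
          - (n : ℝ) * (∑ i, ∑ j, (θtilde n ω - θbar) i * I i j * (θtilde n ω - θbar) j)|}).toReal)
      atTop (nhds 0) :=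
  stmt_3_general θbar I r hlittleo P V θhat θtilde hV Q T hT hVconv hhat htilde
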